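/- arXiv:1412.2976 — 3 statements merged into one kernel-verified Lean document; each statement's English description precedes it below -/
import Mathlib

section
/- Let R be a *-ring, p ∈ R a projector (p² = p = p*), and a, b ∈ R Moore-Penrose invertible with a*p = pa* and b*p = pb*. Then ap + b(1-p) is Moore-Penrose invertible and (ap + b(1-p))† = a†p + b†(1-p). -/
/-!
If `x` commutes with `a` and `a*`, it commutes with `a†`. Indeed, for `e = a a†` one has
`x e = e x e` because `e a = a`, and `e x = e x e` because `e = (a†)* a*` and `a* e = a*`; so `x`
commutes with `a a†`, likewise with `a† a`, and then `x a† = a† a x a† = a† x`.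
Applied to `x = p`, which is self-adjoint and commutes with `a*`, hence with `a`, this shows that
`p` and `1 - p` are orthogonal idempotents commuting with `a, a†, b, b†`. All products of
`a p + b (1 - p)` and `a† p + b† (1 - p)` then split into a `p`-part and a `(1 - p)`-part, and
the Penrose equations follow from those of `a` and of `b`.
-/

/-- `b` is a Moore-Penrose inverse of `a`. -/
def IsMP {R : Type*} [Ring R] [StarRing R] (a b : R) : Prop :=
  a * b * a = a ∧ b * a * b = b ∧ star (a * b) = a * b ∧ star (b * a) = b * a

/-- `p` is a projector: `p² = p = p*`. -/
def IsProjector {R : Type*} [Ring R] [StarRing R] (p : R) : Prop :=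
  p * p = p ∧ star p = p

/-- `a` is *-cancellable. -/
def StarCancellable {R : Type*} [Ring R] [StarRing R] (a : R) : Prop :=
  (∀ x : R, star a * a * x = 0 → a * x = 0) ∧ (∀ x : R, x * (a * star a) = 0 → x * a = 0)

section Semigroup

variable {S : Type*} [Semigroup S] {c d e x : S}

lemma mul_eq_mul_mul_mul_of_commute (hxc : Commute x c) (hec : e * c = c) (hcd : c * d = e) :
    x * e = e * x * e :=
  calc x * e = x * c * d := by rw [← hcd, mul_assoc]
    _ = e * c * x * d := by rw [hxc.eq, hec]
    _ = e * x * e := by rw [mul_assoc e, ← hxc.eq, ← hcd]; simp only [mul_assoc]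

lemma mul_eq_mul_mul_mul_of_commute' (hxc : Commute x c) (hce : c * e = c) (hdc : d * c = e) :
    e * x = e * x * e :=
  calc e * x = d * (x * c) := by rw [← hdc, mul_assoc, hxc.eq]
    _ = d * (c * x * e) := by rw [← hxc.eq, mul_assoc, hce]
    _ = e * x * e := by rw [← hdc]; simp only [mul_assoc]

end Semigroup

lemma IsSelfAdjoint.commute_of_commute_star {R : Type*} [Mul R] [StarMul R] {p a : R}
    (hp : IsSelfAdjoint p) (h : Commute (star a) p) : Commute p a := by
  simpa only [star_star, hp.star_eq] using (Commute.star_star h).symm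

namespace IsMP

variable {R : Type*} [Ring R] [StarRing R] {a a' x : R}

lemma star_mul_mul_inv (h : IsMP a a') : star a * (a * a') = star a := by
  rw [← h.2.2.1, ← star_mul, h.1]

lemma inv_mul_mul_star (h : IsMP a a') : a' * a * star a = star a := by
  rw [← h.2.2.2, ← star_mul, ← mul_assoc, h.1]

lemma commute_mul_inv (h : IsMP a a') (hxa : Commute x a) (hxs : Commute x (star a)) :
    Commute x (a * a') :=
  (mul_eq_mul_mul_mul_of_commute hxa (by rw [h.1]) rfl).trans
    (mul_eq_mul_mul_mul_of_commute' hxs h.star_mul_mul_inv (by rw [← star_mul, h.2.2.1])).symm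

lemma commute_inv_mul (h : IsMP a a') (hxa : Commute x a) (hxs : Commute x (star a)) :
    Commute x (a' * a) :=
  (mul_eq_mul_mul_mul_of_commute hxs h.inv_mul_mul_star (by rw [← star_mul, h.2.2.2])).trans
    (mul_eq_mul_mul_mul_of_commute' hxa (by rw [← mul_assoc, h.1]) rfl).symm

lemma commute_inv (h : IsMP a a') (hxa : Commute x a) (hxs : Commute x (star a)) :
    Commute x a' :=
  calc x * a' = x * (a' * a) * a' := by rw [mul_assoc x, h.2.1]
    _ = a' * (a * x) * a' := by rw [(h.commute_inv_mul hxa hxs).eq, mul_assoc a']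
    _ = a' * (x * (a * a')) := by rw [← hxa.eq]; simp only [mul_assoc]
    _ = a' * x := by rw [(h.commute_mul_inv hxa hxs).eq, ← mul_assoc, ← mul_assoc, h.2.1]

end IsMP

section Projector

variable {R : Type*} [Ring R] {p x y u v : R}

lemma Commute.one_sub_left (h : Commute p x) : Commute (1 - p) x :=
  (Commute.one_left x).sub_left h

lemma mul_add_mul_one_sub_mul (hp : IsIdempotentElem p) (hu : Commute p u) (hv : Commute p v) :
    (x * p + y * (1 - p)) * (u * p + v * (1 - p)) = x * u * p + y * v * (1 - p) := by
  have hpq : p * (1 - p) = 0 := by rw [mul_sub, mul_one, hp.eq, sub_self]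
  have hqp : (1 - p) * p = 0 := by rw [sub_mul, one_mul, hp.eq, sub_self]
  simp only [add_mul, mul_add, mul_assoc, hu.left_comm, hv.left_comm, hu.one_sub_left.left_comm,
    hv.one_sub_left.left_comm, hp.eq, hp.one_sub.eq, hpq, hqp, mul_zero, add_zero, zero_add]

variable [StarRing R]

lemma isSelfAdjoint_mul_add_mul_one_sub (hp : IsSelfAdjoint p) (hx : IsSelfAdjoint x)
    (hy : IsSelfAdjoint y) (hpx : Commute p x) (hpy : Commute p y) :
    IsSelfAdjoint (x * p + y * (1 - p)) :=
  ((hx.commute_iff hp).mp hpx.symm).add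
    ((hy.commute_iff ((IsSelfAdjoint.one R).sub hp)).mp hpy.one_sub_left.symm)

variable {a a' b b' : R}

lemma IsMP.mul_add_mul_one_sub (hp : IsProjector p) (ha : IsMP a a') (hb : IsMP b b')
    (hpa : Commute p a) (hpa' : Commute p a') (hpb : Commute p b) (hpb' : Commute p b') :
    IsMP (a * p + b * (1 - p)) (a' * p + b' * (1 - p)) := by
  obtain ⟨hpp, hps⟩ := hp
  have hprod := mul_add_mul_one_sub_mul (x := a) (y := b) hpp hpa' hpb'
  have hprod' := mul_add_mul_one_sub_mul (x := a') (y := b') hpp hpa hpb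
  refine ⟨?_, ?_, ?_, ?_⟩
  · rw [hprod, mul_add_mul_one_sub_mul hpp hpa hpb, ha.1, hb.1]
  · rw [hprod', mul_add_mul_one_sub_mul hpp hpa' hpb', ha.2.1, hb.2.1]
  · rw [hprod]
    exact isSelfAdjoint_mul_add_mul_one_sub hps ha.2.2.1 hb.2.2.1 (hpa.mul_right hpa')
      (hpb.mul_right hpb')
  · rw [hprod']
    exact isSelfAdjoint_mul_add_mul_one_sub hps ha.2.2.2 hb.2.2.2 (hpa'.mul_right hpa)
      (hpb'.mul_right hpb)

end Projector

theorem stmt3 {R : Type*} [Ring R] [StarRing R] (p a b a' b' : R)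
    (hp : IsProjector p) (ha : IsMP a a') (hb : IsMP b b')
    (hap : star a * p = p * star a) (hbp : star b * p = p * star b) :
    IsMP (a * p + b * (1 - p)) (a' * p + b' * (1 - p)) := by
  have hpa := IsSelfAdjoint.commute_of_commute_star hp.2 hap
  have hpb := IsSelfAdjoint.commute_of_commute_star hp.2 hbp
  exact ha.mul_add_mul_one_sub hp hb hpa (ha.commute_inv hpa hap.symm) hpb
    (hb.commute_inv hpb hbp.symm)
end

section
/- Let R be a *-ring, p, q projectors with p - q Moore-Penrose invertible, and G = (p-q)†p. Then G² = G and G = (1-q)(p-q)†. -/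
/-!
Put `a = p - q` and `d = a†`. Since `a` is self-adjoint, so is `d`, and `d` commutes with `a`.
The projection `1 - d a` onto the kernel of `a` commutes with `p`: on that kernel `p` and `q`
agree, so `p` maps it into itself, and a self-adjoint element leaving the range of a projection
invariant commutes with it. Sandwiching the identity `p a + a p = a + a²` between two copies of `d`
then gives `d p + p d = d + a d`, i.e. `d p = (1 - q) d`, and
`(d p)² = d p (1 - q) d = d (p a) d = d p`.
-/

namespace IsMP

variable {R : Type*} [Ring R] [StarRing R] {a b c : R}

protected lemma star (h : IsMP a b) : IsMP (star a) (star b) := by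
  obtain ⟨h₁, h₂, h₃, h₄⟩ := h
  refine ⟨?_, ?_, ?_, ?_⟩
  · rw [← star_mul, ← star_mul, ← mul_assoc, h₁]
  · rw [← star_mul, ← star_mul, ← mul_assoc, h₂]
  · rw [← star_mul, h₄, h₄]
  · rw [← star_mul, h₃, h₃]

lemma unique (hb : IsMP a b) (hc : IsMP a c) : b = c := by
  obtain ⟨hb₁, hb₂, hb₃, hb₄⟩ := hb
  obtain ⟨hc₁, hc₂, hc₃, hc₄⟩ := hc
  have hab : a * b = a * c :=
    calc a * b = a * c * (a * b) := by rw [← mul_assoc, hc₁]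
      _ = star (a * b * a * c) := by rw [mul_assoc (a * b), star_mul, hb₃, hc₃]
      _ = a * c := by rw [hb₁, hc₃]
  have hba : b * a = c * a :=
    calc b * a = b * a * (c * a) := by rw [mul_assoc, ← mul_assoc a, hc₁]
      _ = star (c * a * (b * a)) := by rw [star_mul, hb₄, hc₄]
      _ = c * a := by rw [mul_assoc, ← mul_assoc a, hb₁, hc₄]
  calc b = b * (a * b) := by rw [← mul_assoc, hb₂]
    _ = c * a * c := by rw [hab, ← mul_assoc, hba]
    _ = c := hc₂

lemma isSelfAdjoint (ha : IsSelfAdjoint a) (h : IsMP a b) : IsSelfAdjoint b := by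
  have h' := h.star
  rw [ha.star_eq] at h'
  exact (h.unique h').symm

lemma commute (ha : IsSelfAdjoint a) (h : IsMP a b) : Commute a b :=
  calc a * b = star (a * b) := h.2.2.1.symm
    _ = b * a := by rw [star_mul, (h.isSelfAdjoint ha).star_eq, ha.star_eq]

end IsMP

lemma IsIdempotentElem.sub_mul_mul_eq_zero {R : Type*} [Ring R] {p q x : R}
    (hp : IsIdempotentElem p) (hq : IsIdempotentElem q) (h : (p - q) * x = 0) :
    (p - q) * (p * x) = 0 := by
  have hpx : p * x = q * x := sub_eq_zero.mp (by rwa [sub_mul] at h)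
  rw [sub_mul, ← mul_assoc, hp.eq, hpx, ← mul_assoc, hq.eq, sub_self]

namespace IsStarProjection

variable {R : Type*} [Ring R] [StarRing R] {p q d : R}

lemma commute_mul_sub_of_isMP (hp : IsStarProjection p) (hq : IsStarProjection q)
    (hd : IsMP (p - q) d) : Commute p (d * (p - q)) := by
  set f := 1 - d * (p - q) with hf_def
  have hf : IsSelfAdjoint f := (IsSelfAdjoint.one R).sub hd.2.2.2
  have hker : (p - q) * f = 0 := by rw [mul_sub, mul_one, ← mul_assoc, hd.1, sub_self]
  have hpf : f * p * f = p * f := by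
    rw [mul_assoc, hf_def, sub_mul, one_mul, mul_assoc,
      hp.isIdempotentElem.sub_mul_mul_eq_zero hq.isIdempotentElem hker, mul_zero, sub_zero]
  have hcomm : Commute p f := (hp.isSelfAdjoint.commute_iff hf).mpr <| by
    rw [← hpf]; simpa only [hf.star_eq] using hp.isSelfAdjoint.conjugate f
  simpa only [hf_def, sub_sub_cancel] using (Commute.one_right p).sub_right hcomm

lemma mul_mul_sub_mul_of_isMP (hp : IsStarProjection p) (hq : IsStarProjection q)
    (hd : IsMP (p - q) d) : d * p * ((p - q) * d) = d * p := by
  have hcomm : (p - q) * d = d * (p - q) := hd.commute (hp.isSelfAdjoint.sub hq.isSelfAdjoint)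
  calc d * p * ((p - q) * d) = d * (p * (d * (p - q))) := by rw [hcomm, mul_assoc]
    _ = d * ((p - q) * d) * p := by
      rw [(hp.commute_mul_sub_of_isMP hq hd).eq, ← mul_assoc, hcomm]
    _ = d * p := by rw [← mul_assoc, hd.2.1]

lemma mul_add_mul_of_isMP (hp : IsStarProjection p) (hq : IsStarProjection q)
    (hd : IsMP (p - q) d) : d * p + p * d = d + (p - q) * d := by
  set a := p - q with ha_def
  have hcomm : a * d = d * a := hd.commute (hp.isSelfAdjoint.sub hq.isSelfAdjoint)
  have hpa : p * a + a * p = a + a * a := by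
    simp only [ha_def, mul_sub, sub_mul, hp.isIdempotentElem.eq, hq.isIdempotentElem.eq]; abel
  have hpd : d * a * p * d = p * d := by
    rw [← (hp.commute_mul_sub_of_isMP hq hd).eq, mul_assoc, hd.2.1]
  calc d * p + p * d = d * p * (a * d) + d * a * p * d := by
        rw [hp.mul_mul_sub_mul_of_isMP hq hd, hpd]
    _ = d * (p * a + a * p) * d := by noncomm_ring
    _ = d * a * d + d * a * (a * d) := by rw [hpa]; noncomm_ring
    _ = d + a * d := by rw [hcomm, ← mul_assoc, hd.2.1]

lemma mul_eq_one_sub_mul_of_isMP (hp : IsStarProjection p) (hq : IsStarProjection q)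
    (hd : IsMP (p - q) d) : d * p = (1 - q) * d :=
  calc d * p = (d * p + p * d) - p * d := by abel
    _ = (1 - q) * d := by rw [hp.mul_add_mul_of_isMP hq hd]; noncomm_ring

end IsStarProjection

theorem stmt9 {R : Type*} [Ring R] [StarRing R] (p q d : R)
    (hp : IsProjector p) (hq : IsProjector q)
    (hd : IsMP (p - q) d) :
    (d * p) * (d * p) = d * p ∧ d * p = (1 - q) * d := by
  have hp' : IsStarProjection p := isStarProjection_iff'.mpr hp
  have hq' : IsStarProjection q := isStarProjection_iff'.mpr hq
  have hG := hp'.mul_eq_one_sub_mul_of_isMP hq' hd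
  refine ⟨?_, hG⟩
  calc d * p * (d * p) = d * p * ((1 - q) * d) := by rw [← hG]
    _ = d * (p * (p - q)) * d := by rw [mul_sub p p q, hp.1]; noncomm_ring
    _ = d * p * ((p - q) * d) := by simp only [mul_assoc]
    _ = d * p := hp'.mul_mul_sub_mul_of_isMP hq' hd
end

section
/- Let R be a *-ring and p, q projectors with p - q Moore-Penrose invertible. Then q(p-q)† = (p-q)†(1-p). -/
section

variable {R : Type*} [Ring R] [StarRing R] {a d x y : R}

theorem isMP_star (h : IsMP a d) : IsMP (star a) (star d) := by
  obtain ⟨h₁, h₂, h₃, h₄⟩ := h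
  refine ⟨?_, ?_, ?_, ?_⟩
  · rw [← star_mul, ← star_mul, ← mul_assoc, h₁]
  · rw [← star_mul, ← star_mul, ← mul_assoc, h₂]
  · rw [← star_mul, star_star, h₄]
  · rw [← star_mul, star_star, h₃]

theorem IsSelfAdjoint.commute_of_mul_mul_eq {e z : R} (he : IsSelfAdjoint e)
    (h : e * z * e = z * e) (h' : e * star z * e = star z * e) : Commute z e := by
  have h'' : e * (z * e) = e * z := by
    simpa only [star_mul, star_star, he.star_eq, mul_assoc] using congrArg star h'
  rw [commute_iff_eq, ← h, mul_assoc, h'']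

theorem IsMP.commute_mul_of_intertwines (h : IsMP a d) (hxy : x * a = a * y)
    (hyx : star a * x = y * star a) : Commute x (a * d) := by
  have sandwich : ∀ z w : R, z * a = a * w → a * d * z * (a * d) = z * (a * d) := by
    intro z w hzw
    rw [← mul_assoc, mul_assoc (a * d), hzw, ← mul_assoc, h.1, ← mul_assoc, hzw]
  have hxy' : star x * a = a * star y := by
    simpa only [star_mul, star_star] using congrArg star hyx
  exact IsSelfAdjoint.commute_of_mul_mul_eq h.2.2.1 (sandwich x y hxy)
    (sandwich (star x) (star y) hxy')

theorem IsMP.mul_eq_mul_of_intertwines (h : IsMP a d) (hxy : x * a = a * y)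
    (hyx : star a * x = y * star a) : d * x = y * d := by
  have hx : Commute x (a * d) := h.commute_mul_of_intertwines hxy hyx
  have hy : Commute y (d * a) := by
    have := (isMP_star h).commute_mul_of_intertwines (x := y) (y := x) hyx.symm
      (by rw [star_star]; exact hxy.symm)
    rwa [← star_mul, h.2.2.2] at this
  calc d * x = d * (a * d * x) := by rw [← mul_assoc, ← mul_assoc, h.2.1]
    _ = d * (x * a) * d := by rw [← hx.eq]; simp only [mul_assoc]
    _ = d * a * y * d := by rw [hxy]; simp only [mul_assoc]
    _ = y * d := by rw [← hy.eq, mul_assoc, h.2.1]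

end

theorem stmt10 {R : Type*} [Ring R] [StarRing R] (p q d : R)
    (hp : IsProjector p) (hq : IsProjector q)
    (hd : IsMP (p - q) d) :
    q * d = d * (1 - p) := by
  have hself : star (p - q) = p - q := by rw [star_sub, hp.2, hq.2]
  have hleft : (1 - p) * (p - q) = (p - q) * q := by
    simp only [mul_sub, sub_mul, one_mul, hp.1, hq.1]; abel
  have hright : (p - q) * (1 - p) = q * (p - q) := by
    simp only [mul_sub, sub_mul, mul_one, hp.1, hq.1]; abel
  exact (hd.mul_eq_mul_of_intertwines hleft (by rw [hself]; exact hright)).symm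
end
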